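/- arXiv:2604.08071 — 3 statements merged into one kernel-verified Lean document; each statement's English description precedes it below -/
import Mathlib

section
/- Let G be a bidirected graph, let u,v ∈ V(G) be vertices, and let α, β ∈ {+,−}. If G has a bidirected path starting at the vertex-side uα and ending at the vertex-side vβ, and also a bidirected path starting at the vertex-side uα̂ and ending at v, then G contains a cycloid. -/
/-!
Bidirected graphs.  A vertex-side is a vertex with a sign (`true` = `+`, `false` = `−`);
a bidirected edge is an unordered pair of vertex-sides (an element of `Sym2 (V × Bool)`).
-/

namespace Paper

variable {V : Type}

/-- A vertex-side: a vertex together with a sign (`true` = `+`, `false` = `−`). -/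
abbrev Side (V : Type) := V × Bool

/-- A bidirected graph on the vertex type `V`: a vertex set together with a set of
bidirected edges, each an unordered pair of vertex-sides with endpoints in `verts`. -/
structure BDGraph (V : Type) where
  verts : Set V
  E : Set (Sym2 (Side V))
  wf : ∀ e ∈ E, ∀ x ∈ e, Prod.fst x ∈ verts

namespace BDGraph

/-- `(u, α)` is a vertex-side of `G`, i.e. some edge of `G` is incident to `u`
with sign `α`. -/
def HasSide (G : BDGraph V) (u : V) (α : Bool) : Prop :=
  ∃ e ∈ G.E, (u, α) ∈ e

/-- Adjacency in the underlying undirected graph `U(G)` (signs ignored). -/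
def uadj (G : BDGraph V) (a b : V) : Prop :=
  ∃ e ∈ G.E, ∃ σ τ : Bool, e = s((a, σ), (b, τ))

/-- Connectivity (reachability) in the underlying undirected graph `U(G)`. -/
def uReach (G : BDGraph V) (a b : V) : Prop :=
  Relation.ReflTransGen G.uadj a b

/-- `v` is a tip of `G`: no two edges of `G` are incident to `v` with different signs. -/
def IsTip (G : BDGraph V) (v : V) : Prop :=
  ∀ e ∈ G.E, ∀ f ∈ G.E, ∀ σ : Bool, (v, σ) ∈ e → (v, !σ) ∈ f → False

/-- `v` is a tip of `G` with sign `α`: every edge of `G` incident to `v` carries the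
sign `α` at `v`. -/
def IsTipWith (G : BDGraph V) (v : V) (α : Bool) : Prop :=
  ∀ e ∈ G.E, ∀ σ : Bool, (v, σ) ∈ e → σ = α

/-- Deletion of the vertex `x` (and all edges incident to it). -/
def deleteVert (G : BDGraph V) (x : V) : BDGraph V where
  verts := G.verts \ {x}
  E := {e | e ∈ G.E ∧ ∀ y : Side V, y ∈ e → y.1 ≠ x}
  wf := by
    rintro e ⟨he, hne⟩ y hy
    exact ⟨G.wf e he y hy, hne y hy⟩

/-- Deletion of a single edge. -/
def deleteEdge (G : BDGraph V) (e₀ : Sym2 (Side V)) : BDGraph V where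
  verts := G.verts
  E := G.E \ {e₀}
  wf := by
    rintro e ⟨he, -⟩ y hy
    exact G.wf e he y hy

/-- `x` is a cutvertex of (the underlying undirected graph of) `G`: some two other
vertices are connected in `G` but no longer connected after deleting `x`. -/
def IsCutvertex (G : BDGraph V) (x : V) : Prop :=
  x ∈ G.verts ∧ ∃ a ∈ G.verts, ∃ b ∈ G.verts, a ≠ x ∧ b ≠ x ∧
    G.uReach a b ∧ ¬ (G.deleteVert x).uReach a b

/-- `G` is connected (underlying undirected graph, nonempty). -/
def Conn (G : BDGraph V) : Prop :=
  G.verts.Nonempty ∧ ∀ a ∈ G.verts, ∀ b ∈ G.verts, G.uReach a b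

/-- `H` is a subgraph of `G`. -/
def IsSubgraphOf (H G : BDGraph V) : Prop :=
  H.verts ⊆ G.verts ∧ H.E ⊆ G.E

end BDGraph

/-! ### Splitting a pair of vertex-sides

Splitting the vertex-side `u α` detaches all edges incident to `u` with the opposite
sign `!α` and reattaches them to a new vertex `u'`.  We split the two vertex-sides
`u α` and `v β` (`u ≠ v`) simultaneously, realising the two new vertices as `Sum.inr u`
and `Sum.inr v` in the vertex type `V ⊕ V` (original vertices are `Sum.inl`). -/

open Classical in
/-- Where each vertex-side goes under the splitting of `u α` and `v β`. -/
noncomputable def splitMap (u : V) (α : Bool) (v : V) (β : Bool) :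
    Side V → Side (V ⊕ V) :=
  fun x =>
    if x = (u, !α) then (Sum.inr u, !α)
    else if x = (v, !β) then (Sum.inr v, !β)
    else (Sum.inl x.1, x.2)

/-- The graph obtained from `G` by splitting the vertex-sides `u α` and `v β`. -/
noncomputable def BDGraph.split2 (G : BDGraph V) (u : V) (α : Bool) (v : V) (β : Bool) :
    BDGraph (V ⊕ V) where
  verts := (Sum.inl '' G.verts) ∪ {Sum.inr u, Sum.inr v}
  E := Sym2.map (splitMap u α v β) '' G.E
  wf := by
    rintro e ⟨f, hf, rfl⟩ x hx
    rw [Sym2.mem_map] at hx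
    obtain ⟨y, hy, rfl⟩ := hx
    by_cases h1 : y = (u, !α)
    · simp only [splitMap, if_pos h1]
      simp
    · by_cases h2 : y = (v, !β)
      · simp only [splitMap, if_neg h1, if_pos h2]
        simp
      · simp only [splitMap, if_neg h1, if_neg h2]
        exact Set.mem_union_left _ ⟨y.1, G.wf f hf y hy, rfl⟩

/-- The pair of vertex-sides `{u α, v β}` is separable in `G`: after splitting `u α`
and `v β`, there is a connected component containing `u` and `v` but neither of the
two new vertices `u'`, `v'`. -/
noncomputable def Separable (G : BDGraph V) (u : V) (α : Bool) (v : V) (β : Bool) : Prop :=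
  u ≠ v ∧
    (G.split2 u α v β).uReach (Sum.inl u) (Sum.inl v) ∧
    ¬ (G.split2 u α v β).uReach (Sum.inl u) (Sum.inr u) ∧
    ¬ (G.split2 u α v β).uReach (Sum.inl u) (Sum.inr v) ∧
    ¬ (G.split2 u α v β).uReach (Sum.inl v) (Sum.inr u) ∧
    ¬ (G.split2 u α v β).uReach (Sum.inl v) (Sum.inr v)

/-- The vertex set of the snarl component of `{u α, v β}`: the vertices of `G` lying in
the connected component of `u` after splitting `u α` and `v β`. -/
noncomputable def SnarlVerts (G : BDGraph V) (u : V) (α : Bool) (v : V) (β : Bool) :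
    Set V :=
  {w | (G.split2 u α v β).uReach (Sum.inl u) (Sum.inl w)}

/-- The edge set of the snarl component of `{u α, v β}`: the edges of `G` lying (after
splitting) in the connected component of `u`. -/
noncomputable def SnarlEdges (G : BDGraph V) (u : V) (α : Bool) (v : V) (β : Bool) :
    Set (Sym2 (Side V)) :=
  {e | e ∈ G.E ∧ ∀ y : Side V, y ∈ e →
      (G.split2 u α v β).uReach (Sum.inl u) (splitMap u α v β y).1}

/-- `{u α, v β}` is a snarl of `G`: separable, and minimal in the sense that the snarl
component `X` contains no vertex `w ∉ {u,v}` with vertex-sides `w γ`, `w !γ` such that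
`{u α, w γ}` and `{w !γ, v β}` are both separable in `G`. -/
noncomputable def IsSnarl (G : BDGraph V) (u : V) (α : Bool) (v : V) (β : Bool) : Prop :=
  Separable G u α v β ∧
    ¬ ∃ w ∈ SnarlVerts G u α v β, w ≠ u ∧ w ≠ v ∧
        ∃ γ : Bool, Separable G u α w γ ∧ Separable G w (!γ) v β

/-! ### Sign-consistent cutvertices and sign-cut graphs -/

/-- A cutvertex `x` of `G` is sign-consistent if `x` is a tip in `G[V(C) ∪ {x}]` for
every connected component `C` of `G − x` (components are described by a member `a`). -/
def BDGraph.SignConsistent (G : BDGraph V) (x : V) : Prop :=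
  G.IsCutvertex x ∧
    ∀ a ∈ (G.deleteVert x).verts,
      ∀ e ∈ G.E, ∀ f ∈ G.E,
        (∀ y : Side V, y ∈ e → y.1 = x ∨ (G.deleteVert x).uReach a y.1) →
        (∀ y : Side V, y ∈ f → y.1 = x ∨ (G.deleteVert x).uReach a y.1) →
        ∀ σ τ : Bool, (x, σ) ∈ e → (x, τ) ∈ f → σ = τ

open Classical in
/-- After splitting every sign-consistent vertex of `G` and relabelling, the two copies
of a sign-consistent vertex `x` are identified with the pairs `(x, true)`, `(x, false)`;
any other vertex `w` is identified with `(w, true)`.  `scKey G` sends a vertex-side to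
the copy of its vertex that it is attached to. -/
noncomputable def scKey (G : BDGraph V) : Side V → Side V :=
  fun x => if G.SignConsistent x.1 then x else (x.1, true)

lemma scKey_fst (G : BDGraph V) (y : Side V) : (scKey G y).1 = y.1 := by
  unfold scKey
  split <;> rfl

lemma scKey_idem (G : BDGraph V) (y : Side V) : scKey G (scKey G y) = scKey G y := by
  by_cases h : G.SignConsistent y.1
  · simp [scKey, h]
  · simp [scKey, h]

/-- The graph obtained from `G` by simultaneously splitting all sign-consistent
vertices (on the vertex type `V × Bool`, cf. `scKey`). -/
noncomputable def BDGraph.splitAll (G : BDGraph V) : BDGraph (Side V) where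
  verts := {p : Side V | p.1 ∈ G.verts ∧ scKey G p = p}
  E := Sym2.map (fun y : Side V => (scKey G y, y.2)) '' G.E
  wf := by
    rintro e ⟨f, hf, rfl⟩ x hx
    rw [Sym2.mem_map] at hx
    obtain ⟨y, hy, rfl⟩ := hx
    show (scKey G y).1 ∈ G.verts ∧ scKey G (scKey G y) = scKey G y
    exact ⟨by rw [scKey_fst]; exact G.wf f hf y hy, scKey_idem G y⟩

/-- `F` is a sign-cut graph of `G`: one of the graphs obtained by splitting every
sign-consistent vertex of `G` and relabelling each new vertex `y'` back to `y`;
concretely, the subgraph of `G` corresponding to a connected component of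
`G.splitAll`. -/
noncomputable def IsSignCutGraph (G F : BDGraph V) : Prop :=
  ∃ p ∈ G.splitAll.verts,
    F.verts = {w : V | ∃ σ : Bool, (w, σ) ∈ G.splitAll.verts ∧
                  G.splitAll.uReach p (w, σ)} ∧
    F.E = {e | e ∈ G.E ∧ ∀ y : Side V, y ∈ e → G.splitAll.uReach p (scKey G y)}

/-! ### Blocks -/

/-- `H` is a block of `G`: a maximal connected subgraph of `G` without a cutvertex. -/
def IsBlock (G H : BDGraph V) : Prop :=
  H.IsSubgraphOf G ∧ H.Conn ∧ (∀ x, ¬ H.IsCutvertex x) ∧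
    ∀ H' : BDGraph V, H'.IsSubgraphOf G → H.IsSubgraphOf H' → H'.Conn →
      (∀ x, ¬ H'.IsCutvertex x) → H'.verts = H.verts ∧ H'.E = H.E

/-- `H'` is a dangling block of `v` with respect to the block `H`:
a block of `G` different from `H` containing `v` with vertex-sides of opposite
signs at `v`. -/
def IsDanglingBlock (G H : BDGraph V) (v : V) (H' : BDGraph V) : Prop :=
  IsBlock G H' ∧ ¬ (H'.verts = H.verts ∧ H'.E = H.E) ∧ v ∈ H'.verts ∧
    H'.HasSide v true ∧ H'.HasSide v false

/-- `{u,v}` is a separation pair of `H`: some two other vertices of `H` are connected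
in `H` but no longer connected after removing `u` and `v`. -/
def IsSepPairB (H : BDGraph V) (u v : V) : Prop :=
  ∃ a ∈ H.verts, ∃ b ∈ H.verts, a ≠ u ∧ a ≠ v ∧ b ≠ u ∧ b ≠ v ∧
    H.uReach a b ∧ ¬ ((H.deleteVert u).deleteVert v).uReach a b

/-- `{u,v}` is a split pair of `H`: a separation pair of `H` or an edge of `H`. -/
def IsSplitPairB (H : BDGraph V) (u v : V) : Prop :=
  IsSepPairB H u v ∨ ∃ e ∈ H.E, ∃ σ τ : Bool, e = s((u, σ), (v, τ))

/-! ### Bidirected walks, paths and cycloids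

A bidirected walk `{v₁ α₁, v₂ α̂₂}, {v₂ α₂, v₃ α̂₃}, …` is encoded by the list
`[(v₁, α₁), (v₂, α₂), …]` of its *departing* sides: the first entry `(v₁, α₁)` is the
side of `v₁` on the first edge, and for `i ≥ 2` the walk arrives at `vᵢ` with sign
`!αᵢ` and departs with sign `αᵢ` (so the sign alternates at every internal vertex). -/

/-- One step of a bidirected walk, between consecutive departing sides. -/
def BStep (G : BDGraph V) (x y : Side V) : Prop :=
  s(x, (y.1, !y.2)) ∈ G.E

/-- `p` encodes a bidirected walk of `G` (at least one edge). -/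
def IsBWalk (G : BDGraph V) (p : List (Side V)) : Prop :=
  2 ≤ p.length ∧ p.Chain' (BStep G)

/-- `p` encodes a `u α`-`v β` bidirected path of `G`: a bidirected walk without
repeated vertices which starts at `u` with sign `α` and arrives at `v` with sign `β`
(so the last departing side recorded is `(v, !β)`). -/
def IsBPath (G : BDGraph V) (p : List (Side V)) (u : V) (α : Bool) (v : V) (β : Bool) :
    Prop :=
  IsBWalk G p ∧ p.head? = some (u, α) ∧ p.getLast? = some (v, !β) ∧
    (p.map Prod.fst).Nodup

/-- `G` has a cycloid: a closed bidirected walk through pairwise distinct vertices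
whose sign alternates at every vertex, except possibly at one (exceptional) vertex,
which we may take to be the starting vertex.  The closing edge either alternates at
the start vertex (`s(y, (x.1, !x.2))`) or fails to alternate there (`s(y, x)`). -/
def HasCycloid (G : BDGraph V) : Prop :=
  ∃ p : List (Side V), p ≠ [] ∧ (p.map Prod.fst).Nodup ∧ p.Chain' (BStep G) ∧
    ∃ x y : Side V, p.head? = some x ∧ p.getLast? = some y ∧
      (s(y, (x.1, !x.2)) ∈ G.E ∨ s(y, x) ∈ G.E)

/-- `G` has a cycloid with an exceptional vertex: exactly one vertex (the starting
one, after rotation) fails sign alternation. -/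
def HasExceptionalCycloid (G : BDGraph V) : Prop :=
  ∃ p : List (Side V), p ≠ [] ∧ (p.map Prod.fst).Nodup ∧ p.Chain' (BStep G) ∧
    ∃ x y : Side V, p.head? = some x ∧ p.getLast? = some y ∧ s(y, x) ∈ G.E

/-! ### Flipping a vertex -/

open Classical in
/-- Flip the sign of every vertex-side of `u`. -/
noncomputable def flipSide (u : V) : Side V → Side V :=
  fun x => if x.1 = u then (x.1, !x.2) else x

/-- The graph obtained from `G` by flipping the vertex `u` (every positive vertex-side
of `u` becomes negative and vice versa). -/
noncomputable def BDGraph.flip (G : BDGraph V) (u : V) : BDGraph V where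
  verts := G.verts
  E := Sym2.map (flipSide u) '' G.E
  wf := by
    rintro e ⟨f, hf, rfl⟩ x hx
    rw [Sym2.mem_map] at hx
    obtain ⟨y, hy, rfl⟩ := hx
    have h1 : (flipSide u y).1 = y.1 := by
      unfold flipSide
      split <;> rfl
    rw [h1]
    exact G.wf f hf y hy

/-!
Follow the `u !α`-path `Q` until it first meets the `u α`-path `P`, at a vertex `w`. Walking
back along `P` from `w` to `u` and then along `Q` from `u` to `w` is a closed walk through
distinct vertices. It alternates at `u`, since it arrives there on side `α` and leaves on side
`!α`, and at every other vertex except possibly `w`; hence it is a cycloid with `w` as the only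
candidate for the exceptional vertex.
-/

def oppSide (x : Side V) : Side V := (x.1, !x.2)

/-- The departing sides of a walk traversed backwards are its arriving sides, in reverse order. -/
def reverseWalk (p : List (Side V)) : List (Side V) := (p.map oppSide).reverse

lemma bStep_oppSide_oppSide {G : BDGraph V} {x y : Side V} :
    BStep G (oppSide y) (oppSide x) ↔ BStep G x y := by
  simp [BStep, oppSide, Sym2.eq_swap]

lemma isChain_reverseWalk {G : BDGraph V} {p : List (Side V)} (hp : p.IsChain (BStep G)) :
    (reverseWalk p).IsChain (BStep G) := by
  rw [reverseWalk, List.isChain_reverse, List.isChain_map]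
  exact hp.imp fun _ _ => bStep_oppSide_oppSide.mpr

lemma reverseWalk_cons (x : Side V) (p : List (Side V)) :
    reverseWalk (x :: p) = reverseWalk p ++ [oppSide x] := by
  simp [reverseWalk]

lemma head?_reverseWalk (p : List (Side V)) :
    (reverseWalk p).head? = p.getLast?.map oppSide := by
  simp [reverseWalk, List.head?_reverse, List.getLast?_map]

lemma map_fst_reverseWalk (p : List (Side V)) :
    (reverseWalk p).map Prod.fst = (p.map Prod.fst).reverse := by
  simp [reverseWalk, List.map_reverse, Function.comp_def, oppSide]

/-- If the closing step does not alternate at the first vertex, that vertex is exceptional. -/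
lemma hasCycloid_of_bStep_to_head {G : BDGraph V} {p : List (Side V)} {x y z : Side V}
    (hnodup : (p.map Prod.fst).Nodup) (hchain : p.IsChain (BStep G))
    (hx : p.head? = some x) (hy : p.getLast? = some y) (hyz : BStep G y z) (hzx : z.1 = x.1) :
    HasCycloid G := by
  refine ⟨p, by rintro rfl; simp at hx, hnodup, hchain, x, y, hx, hy, ?_⟩
  obtain ⟨a, σ⟩ := x
  obtain ⟨b, τ⟩ := z
  obtain rfl : b = a := hzx
  unfold BStep at hyz
  cases σ <;> cases τ <;> simp_all

lemma hasCycloid_of_reverseWalk_append {G : BDGraph V} {u : V} {α : Bool}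
    {T A : List (Side V)} {x₀ w : Side V}
    (hp : ((u, α) :: T).IsChain (BStep G)) (hpn : (((u, α) :: T).map Prod.fst).Nodup)
    (hlast : ((u, α) :: T).getLast? = some x₀)
    (hq : ((u, !α) :: A ++ [w]).IsChain (BStep G)) (hAn : (A.map Prod.fst).Nodup)
    (hAp : ∀ a ∈ A, a.1 ∉ ((u, α) :: T).map Prod.fst) (hw : w.1 = x₀.1) :
    HasCycloid G := by
  have hL : reverseWalk ((u, α) :: T) ++ A = reverseWalk T ++ (u, !α) :: A := by
    simp [reverseWalk_cons, oppSide]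
  obtain ⟨hqA, -, hstep⟩ := List.isChain_append.mp hq
  refine hasCycloid_of_bStep_to_head (p := reverseWalk ((u, α) :: T) ++ A) (x := oppSide x₀)
    (z := w) ?_ ?_ ?_ (hL ▸ List.getLast?_append_of_ne_nil _ (List.cons_ne_nil _ _))
    (hstep _ (List.getLast?_eq_some_getLast _) w rfl) hw
  · rw [List.map_append, map_fst_reverseWalk, List.nodup_append, List.nodup_reverse]
    refine ⟨hpn, hAn, fun a ha b hb hab => ?_⟩
    obtain ⟨c, hc, rfl⟩ := List.mem_map.mp hb
    exact hAp c hc (hab ▸ List.mem_reverse.mp ha)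
  · have := (reverseWalk_cons (u, α) T ▸ isChain_reverseWalk hp).append_overlap hqA
      (List.cons_ne_nil _ [])
    simpa [hL, oppSide] using this
  · rw [List.head?_append, head?_reverseWalk, hlast]
    rfl

lemma hasCycloid_of_ear {G : BDGraph V} {u : V} {α : Bool} {p A : List (Side V)}
    {w : Side V} (hp : p.IsChain (BStep G)) (hpn : (p.map Prod.fst).Nodup)
    (hph : p.head? = some (u, α)) (hq : ((u, !α) :: A ++ [w]).IsChain (BStep G))
    (hAn : (A.map Prod.fst).Nodup) (hAp : ∀ a ∈ A, a.1 ∉ p.map Prod.fst)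
    (hw : w.1 ∈ p.map Prod.fst) : HasCycloid G := by
  obtain ⟨x₀, hx₀, hx₀w⟩ := List.mem_map.mp hw
  obtain ⟨C, D, rfl⟩ := List.append_of_mem hx₀
  obtain ⟨T, hT⟩ : ∃ T, C ++ [x₀] = (u, α) :: T :=
    List.head?_eq_some_iff.mp (by cases C <;> simp_all)
  have hpre : (u, α) :: T <+: C ++ x₀ :: D := hT ▸ ⟨D, by simp⟩
  have hsub := hpre.sublist.map Prod.fst
  exact hasCycloid_of_reverseWalk_append (hp.prefix hpre) (hpn.sublist hsub) (by simp [← hT])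
    hq hAn (fun a ha h => hAp a ha (hsub.subset h)) hx₀w.symm

/-- If `G` has a `u α`-`v β` bidirected path and also a `u !α`-`v`
bidirected path (arrival sign at `v` unconstrained), then `G` contains a cycloid. -/
theorem statement_15 (G : BDGraph V) (u v : V) (α β : Bool)
    (h1 : ∃ p : List (Side V), IsBPath G p u α v β)
    (h2 : ∃ q : List (Side V), ∃ γ : Bool, IsBPath G q u (!α) v γ) :
    HasCycloid G := by
  classical
  obtain ⟨P, ⟨-, hP⟩, hPhead, hPlast, hPn⟩ := h1
  obtain ⟨Q, γ, ⟨hQlen, hQ⟩, hQhead, hQlast, hQn⟩ := h2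
  obtain ⟨Q', rfl⟩ := List.head?_eq_some_iff.mp hQhead
  have hvP : v ∈ P.map Prod.fst :=
    List.mem_map_of_mem (f := Prod.fst) (List.mem_of_getLast? hPlast)
  have hvQ' : (v, !γ) ∈ Q' := by
    cases Q' with
    | nil => simp at hQlen
    | cons b Q' => exact List.mem_of_getLast? (by rwa [List.getLast?_cons_cons] at hQlast)
  -- `w` is the first side of `Q'` whose vertex lies on `P`
  obtain ⟨w, hw⟩ := Option.isSome_iff_exists.mp
    (List.find?_isSome (p := fun x => decide (x.1 ∈ P.map Prod.fst)) |>.mpr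
      ⟨_, hvQ', decide_eq_true hvP⟩)
  obtain ⟨hwP, A, R, rfl, hA⟩ := List.find?_eq_some_iff_append.mp hw
  exact hasCycloid_of_ear (A := A) (w := w) hP hPn hPhead (hQ.prefix ⟨R, by simp⟩)
    (hQn.sublist (((List.sublist_append_left A (w :: R)).cons _).map Prod.fst))
    (fun a ha => by simpa using hA a ha) (by simpa using hwP)

end Paper
end

section
/- Let G be a bidirected graph having at least two vertices. If G has at most one tip, then G contains a cycloid. -/
/-!
Bidirected graphs.  A vertex-side is a vertex with a sign (`true` = `+`, `false` = `−`);
a bidirected edge is an unordered pair of vertex-sides (an element of `Sym2 (V × Bool)`).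
-/

namespace Paper

variable {V : Type}

/-!
Every vertex other than a suitable start vertex `v₁` that can be entered with some sign can be
left with the opposite sign: it is not a tip, since `v₁` is the tip if there is one with an
edge. So a bidirected walk from `v₁` through distinct vertices can always be continued, until,
by finiteness, its next edge returns to a vertex already on it. The walk from that vertex on,
closed by this edge, is a cycloid whose only possibly exceptional vertex is the revisited one.
-/

lemma _root_.List.Nodup.length_le_ncard {α : Type*} {l : List α} {s : Set α} (hl : l.Nodup)
    (hs : s.Finite) (hsub : ∀ x ∈ l, x ∈ s) : l.length ≤ s.ncard := by
  classical
  rw [← List.toFinset_card_of_nodup hl, ← Set.ncard_coe_finset]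
  exact Set.ncard_le_ncard (fun x hx => hsub x (List.mem_toFinset.1 hx)) hs

namespace BDGraph

variable {G : BDGraph V}

lemma HasSide.mem_verts {v : V} {α : Bool} (h : G.HasSide v α) : v ∈ G.verts :=
  let ⟨e, he, hv⟩ := h
  G.wf e he _ hv

lemma hasSide_of_not_isTip {w : V} (h : ¬ G.IsTip w) (δ : Bool) : G.HasSide w δ := by
  simp only [IsTip, not_forall] at h
  obtain ⟨e, he, f, hf, σ, hσ, hσ', -⟩ := h
  rcases Bool.eq_or_eq_not δ σ with rfl | rfl
  · exact ⟨e, he, hσ⟩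
  · exact ⟨f, hf, hσ'⟩

lemma exists_start_of_atMostOneTip (htwo : ∃ a ∈ G.verts, ∃ b ∈ G.verts, a ≠ b)
    (htip : ∀ a ∈ G.verts, ∀ b ∈ G.verts, G.IsTip a → G.IsTip b → a = b) :
    ∃ v₁ α₁, G.HasSide v₁ α₁ ∧ ∀ w ≠ v₁, ∀ δ, G.HasSide w δ → G.HasSide w (!δ) := by
  by_cases ht : ∃ t α, G.IsTip t ∧ G.HasSide t α
  · obtain ⟨t, α, htt, hα⟩ := ht
    refine ⟨t, α, hα, fun w hw δ hδ => hasSide_of_not_isTip (fun hwt => hw ?_) _⟩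
    exact htip w hδ.mem_verts t hα.mem_verts hwt htt
  · push Not at ht
    obtain ⟨c, hc⟩ : ∃ c, ¬ G.IsTip c := by
      obtain ⟨a, ha, b, hb, hab⟩ := htwo
      by_contra! h
      exact hab (htip a ha b hb (h a) (h b))
    exact ⟨c, true, hasSide_of_not_isTip hc true,
      fun w _ δ hδ => hasSide_of_not_isTip (fun hwt => ht w δ hwt hδ) _⟩

lemma hasCycloid_of_edge_to_walk {p : List (Side V)} {y : Side V} {w : V} {δ : Bool}
    (hchain : p.IsChain (BStep G)) (hnodup : (p.map Prod.fst).Nodup)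
    (hlast : p.getLast? = some y) (he : s(y, (w, δ)) ∈ G.E) (hw : w ∈ p.map Prod.fst) :
    HasCycloid G := by
  obtain ⟨⟨_, β⟩, hx, rfl⟩ := List.mem_map.1 hw
  obtain ⟨r, q, rfl⟩ := List.append_of_mem hx
  refine ⟨_ :: q, List.cons_ne_nil _ _, ?_, hchain.suffix ⟨r, rfl⟩, _, y, rfl, ?_, ?_⟩
  · rw [List.map_append] at hnodup
    exact hnodup.of_append_right
  · simpa [List.getLast?_append] using hlast
  · rcases Bool.eq_or_eq_not δ β with rfl | rfl
    · exact Or.inr he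
    · exact Or.inl he

theorem hasCycloid_of_walk_from {v₁ : V} (hfin : G.verts.Finite)
    (hpass : ∀ w ≠ v₁, ∀ δ, G.HasSide w δ → G.HasSide w (!δ))
    {p : List (Side V)} (hchain : p.IsChain (BStep G)) (hnodup : (p.map Prod.fst).Nodup)
    (hverts : ∀ v ∈ p.map Prod.fst, v ∈ G.verts) (hv₁ : v₁ ∈ p.map Prod.fst)
    {y : Side V} (hlast : p.getLast? = some y) (hy : G.HasSide y.1 y.2) :
    HasCycloid G := by
  obtain ⟨e, he, hmem⟩ := hy
  obtain ⟨⟨w, δ⟩, rfl⟩ := Sym2.mem_iff_exists.1 hmem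
  by_cases hw : w ∈ p.map Prod.fst
  · exact hasCycloid_of_edge_to_walk hchain hnodup hlast he hw
  have hw_side : G.HasSide w δ := ⟨_, he, Sym2.mem_mk_right _ _⟩
  have hw_ne : w ≠ v₁ := fun h => hw (h ▸ hv₁)
  have hmap : (p ++ [(w, !δ)]).map Prod.fst = (p.map Prod.fst).concat w := by simp
  have hchain' : (p ++ [(w, !δ)]).IsChain (BStep G) :=
    hchain.append (List.isChain_singleton _) fun a ha b hb => by
      simp only [hlast, Option.mem_def, Option.some.injEq, List.head?_cons] at ha hb
      subst ha hb
      simpa only [BStep, Bool.not_not] using he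
  have hnodup' : ((p ++ [(w, !δ)]).map Prod.fst).Nodup := hmap ▸ hnodup.concat hw
  have hverts' : ∀ v ∈ (p ++ [(w, !δ)]).map Prod.fst, v ∈ G.verts := by
    simpa only [hmap, List.concat_eq_append, List.mem_append, List.mem_singleton,
      forall_eq_or_imp, or_imp, forall_and, forall_eq] using ⟨hverts, hw_side.mem_verts⟩
  have hlen := List.Nodup.length_le_ncard hnodup' hfin hverts'
  exact hasCycloid_of_walk_from hfin hpass hchain' hnodup' hverts'
    (by simpa only [hmap, List.concat_eq_append] using List.mem_append_left _ hv₁)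
    List.getLast?_concat (hpass w hw_ne δ hw_side)
termination_by G.verts.ncard - p.length
decreasing_by
  simp only [List.length_map, List.length_append, List.length_singleton] at hlen ⊢
  omega

end BDGraph

/-- A (finite) bidirected graph with at least two vertices and at
most one tip contains a cycloid.  (A vertex incident to no edge counts as a tip.) -/
theorem statement_16 (G : BDGraph V) (hfin : G.verts.Finite)
    (htwo : ∃ a ∈ G.verts, ∃ b ∈ G.verts, a ≠ b)
    (htip : ∀ a ∈ G.verts, ∀ b ∈ G.verts, G.IsTip a → G.IsTip b → a = b) :
    HasCycloid G := by
  obtain ⟨v₁, α₁, hside, hpass⟩ := G.exists_start_of_atMostOneTip htwo htip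
  exact BDGraph.hasCycloid_of_walk_from hfin hpass (p := [(v₁, α₁)]) (List.isChain_singleton _)
    (List.nodup_singleton _) (by simpa using hside.mem_verts) (by simp) rfl hside

end Paper
end

section
/- Let G₃ = (A, B, C, E₃) be an undirected tripartite graph (every edge has its endpoints in distinct parts among A, B, C). Construct the bidirected graph G on vertex set A ∪ B ∪ C ∪ {x, y, z}, where x, y, z are three new auxiliary vertices, with the following edges: for every edge {u,v} ∈ E₃, (1) if u ∈ A and v ∈ B, add the bidirected edge {u−, v+}; (2) if u ∈ A and v ∈ C, add {u+, v−}; (3) if u ∈ B and v ∈ C, add {u−, v−}; and additionally add the three bidirected edges {x+, y−}, {y+, z−}, {z+, x−}. Then G has a bidirected feedback edge if and only if G₃ does not contain a triangle (three pairwise adjacent vertices). -/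
/-!
Bidirected graphs.  A vertex-side is a vertex with a sign (`true` = `+`, `false` = `−`);
a bidirected edge is an unordered pair of vertex-sides (an element of `Sym2 (V × Bool)`).
-/

namespace Paper

variable {V : Type}

/-!
A triangle `a ∈ A`, `b ∈ B`, `c ∈ C` yields the cycloid `c⁻ b⁺ a⁺` (exceptional at `c`), which
shares no edge with the cycloid `x y z`; hence no edge lies on every cycloid.

Conversely, suppose there is no triangle and delete `{x+, y−}`. The potential
`reductionPotential` increases by exactly one along every bidirected step of the remaining graph.
So there is no closed alternating walk, every cycloid is exceptional, and its length is the
difference of the potential between the two sides of its exceptional vertex. That difference is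
at most `3` and never `2`; a cycloid of length `1` would be a loop, and one of length `3` is a
triangle of the underlying graph, which avoids `x, y, z` (their remaining edges form a path) and
so is a triangle of the tripartite graph.
-/

theorem potential_getLast_of_isChain {α : Type*} {r : α → α → Prop} (φ : α → ℤ)
    (hφ : ∀ a b, r a b → φ b = φ a + 1) (a : α) (l : List α) (h : (a :: l).IsChain r) :
    φ ((a :: l).getLast (List.cons_ne_nil a l)) = φ a + l.length := by
  induction l generalizing a with
  | nil => simp
  | cons b l ih =>
    rw [List.isChain_cons_cons] at h
    rw [List.getLast_cons_cons, ih b h.2, hφ a b h.1]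
    simp only [List.length_cons]
    push_cast
    ring

theorem BStep.uadj {G : BDGraph V} {s t : Side V} (h : BStep G s t) : G.uadj s.1 t.1 :=
  ⟨_, h, s.2, !t.2, rfl⟩

theorem exists_exceptional_cycloid_of_potential {G : BDGraph V} (φ : Side V → ℤ)
    (hφ : ∀ s t, BStep G s t → φ t = φ s + 1) (hG : HasCycloid G) :
    ∃ s l, ((s :: l).map Prod.fst).Nodup ∧ (s :: l).IsChain (BStep G) ∧
      BStep G ((s :: l).getLast (List.cons_ne_nil s l)) (s.1, !s.2) ∧
      (l.length : ℤ) + 1 = φ (s.1, !s.2) - φ s := by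
  obtain ⟨_ | ⟨s, l⟩, hne, hnodup, hchain, s', t, hhead, hlast, hclose⟩ := hG
  · exact absurd rfl hne
  obtain rfl : s = s' := Option.some.inj hhead
  obtain rfl : (s :: l).getLast (List.cons_ne_nil s l) = t := by
    rw [List.getLast?_eq_some_getLast (List.cons_ne_nil s l)] at hlast
    exact Option.some.inj hlast
  have hpot := potential_getLast_of_isChain φ hφ s l hchain
  rcases hclose with hclose | hclose
  · have := hφ _ _ hclose
    omega
  · have hstep : BStep G ((s :: l).getLast (List.cons_ne_nil s l)) (s.1, !s.2) := by
      simpa [BStep] using hclose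
    refine ⟨s, l, hnodup, hchain, hstep, ?_⟩
    have := hφ _ _ hstep
    omega

theorem hasCycloid_of_triangle {G : BDGraph V} {u v w : V} (huv : u ≠ v) (hvw : v ≠ w)
    (huw : u ≠ w) {α β γ δ : Bool} (h₁ : s((u, α), (v, β)) ∈ G.E)
    (h₂ : s((v, !β), (w, γ)) ∈ G.E) (h₃ : s((w, !γ), (u, δ)) ∈ G.E) : HasCycloid G := by
  refine ⟨[(u, α), (v, !β), (w, !γ)], by simp, by simp [huv, hvw, huw], ?_,
    (u, α), (w, !γ), rfl, rfl, ?_⟩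
  · exact List.isChain_cons_cons.2
      ⟨by simpa [BStep] using h₁, List.isChain_pair.2 (by simpa [BStep] using h₂)⟩
  · cases Bool.eq_or_eq_not δ α with
    | inl h => exact Or.inr (h ▸ h₃)
    | inr h => exact Or.inl (h ▸ h₃)

structure IsReductionGraph (A B C : Set V) (x y z : V) (R : V → V → Prop) (G : BDGraph V) :
    Prop where
  disjoint_AB : Disjoint A B
  disjoint_AC : Disjoint A C
  disjoint_BC : Disjoint B C
  x_not_mem : x ∉ A ∪ B ∪ C
  y_not_mem : y ∉ A ∪ B ∪ C
  z_not_mem : z ∉ A ∪ B ∪ C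
  x_ne_y : x ≠ y
  y_ne_z : y ≠ z
  x_ne_z : x ≠ z
  edges : G.E =
    {e | ∃ a b, R a b ∧
        ((a ∈ A ∧ b ∈ B ∧ e = s((a, false), (b, true))) ∨
         (a ∈ A ∧ b ∈ C ∧ e = s((a, true), (b, false))) ∨
         (a ∈ B ∧ b ∈ C ∧ e = s((a, false), (b, false))))} ∪
      {s((x, true), (y, false)), s((y, true), (z, false)), s((z, true), (x, false))}

open Classical in
noncomputable def reductionPotential (A B C : Set V) (x y z : V) (s : Side V) : ℤ :=
  if s.1 ∈ A then (if s.2 then 2 else 1)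
  else if s.1 ∈ B then (if s.2 then 1 else 2)
  else if s.1 ∈ C then (if s.2 then 3 else 0)
  else if s.1 = x then (if s.2 then 2 else -1)
  else if s.1 = y then (if s.2 then 0 else 1)
  else if s.1 = z then (if s.2 then 1 else 0)
  else 0

theorem reductionPotential_flip_sub (A B C : Set V) (x y z : V) (s : Side V) :
    reductionPotential A B C x y z (s.1, !s.2) - reductionPotential A B C x y z s ≤ 3 ∧
      reductionPotential A B C x y z (s.1, !s.2) - reductionPotential A B C x y z s ≠ 2 := by
  obtain ⟨v, σ⟩ := s
  unfold reductionPotential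
  split_ifs <;> cases σ <;> simp

namespace IsReductionGraph

variable {A B C : Set V} {x y z : V} {R : V → V → Prop} {G : BDGraph V}

theorem mem_edges_cases (h : IsReductionGraph A B C x y z R G) {e : Sym2 (Side V)}
    (he : e ∈ G.E) :
    (∃ a ∈ A, ∃ b ∈ B, R a b ∧ e = s((a, false), (b, true))) ∨
    (∃ a ∈ A, ∃ c ∈ C, R a c ∧ e = s((a, true), (c, false))) ∨
    (∃ b ∈ B, ∃ c ∈ C, R b c ∧ e = s((b, false), (c, false))) ∨
    e = s((x, true), (y, false)) ∨ e = s((y, true), (z, false)) ∨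
    e = s((z, true), (x, false)) := by
  rw [h.edges] at he
  aesop

theorem level_eq_add_one_of_bStep (h : IsReductionGraph A B C x y z R G) {s t : Side V}
    (hst : BStep (G.deleteEdge s((x, true), (y, false))) s t) :
    reductionPotential A B C x y z t = reductionPotential A B C x y z s + 1 := by
  obtain ⟨hst, hne⟩ := hst
  obtain ⟨u, σ⟩ := s
  obtain ⟨v, τ⟩ := t
  have hx := h.x_not_mem
  have hy := h.y_not_mem
  have hz := h.z_not_mem
  simp only [Set.mem_union, not_or] at hx hy hz
  have hBA : ∀ w ∈ B, w ∉ A := fun w hB hA => Set.disjoint_left.1 h.disjoint_AB hA hB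
  have hCA : ∀ w ∈ C, w ∉ A := fun w hC hA => Set.disjoint_left.1 h.disjoint_AC hA hC
  have hCB : ∀ w ∈ C, w ∉ B := fun w hC hB => Set.disjoint_left.1 h.disjoint_BC hB hC
  rcases h.mem_edges_cases hst with ⟨a, ha, b, hb, -, he⟩ | ⟨a, ha, c, hc, -, he⟩ |
    ⟨b, hb, c, hc, -, he⟩ | he | he | he
  all_goals first | exact absurd he hne | skip
  all_goals
    simp only [Sym2.eq_iff, Prod.mk.injEq, Bool.not_eq_eq_eq_not] at he
    rcases he with ⟨⟨rfl, rfl⟩, rfl, rfl⟩ | ⟨⟨rfl, rfl⟩, rfl, rfl⟩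
  all_goals simp [reductionPotential, *, h.x_ne_y.symm, h.y_ne_z.symm, h.x_ne_z.symm]

theorem loop_not_mem_edges (h : IsReductionGraph A B C x y z R G) (p : Side V) :
    s(p, p) ∉ G.E := by
  intro hp
  have hBC := Set.disjoint_left.1 h.disjoint_BC
  rcases h.mem_edges_cases hp with ⟨a, -, b, -, -, he⟩ | ⟨a, -, c, -, -, he⟩ |
    ⟨b, hb, c, hc, -, he⟩ | he | he | he
  all_goals grind

theorem uadj_deleteEdge_cases (h : IsReductionGraph A B C x y z R G) {u v : V}
    (huv : (G.deleteEdge s((x, true), (y, false))).uadj u v) :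
    R u v ∨ R v u ∨ (u ∉ A ∪ B ∪ C ∧ v ∉ A ∪ B ∪ C ∧ (u = z ∨ v = z)) := by
  obtain ⟨e, ⟨he, hne⟩, σ, τ, rfl⟩ := huv
  rcases h.mem_edges_cases he with ⟨a, ha, b, hb, hab, he⟩ | ⟨a, ha, c, hc, hac, he⟩ |
    ⟨b, hb, c, hc, hbc, he⟩ | he | he | he
  all_goals first | exact absurd he hne | skip
  all_goals
    simp only [Sym2.eq_iff, Prod.mk.injEq] at he
    rcases he with ⟨⟨rfl, -⟩, rfl, -⟩ | ⟨⟨rfl, -⟩, rfl, -⟩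
  all_goals simp [*, h.y_not_mem, h.z_not_mem, h.x_not_mem]

theorem exists_triangle_of_uadj (h : IsReductionGraph A B C x y z R G)
    (hsymm : ∀ a b, R a b → R b a) (hR : ∀ a b, R a b → a ∈ A ∪ B ∪ C) {u v w : V}
    (huv : u ≠ v) (hvw : v ≠ w) (hwu : w ≠ u)
    (h₁ : (G.deleteEdge s((x, true), (y, false))).uadj u v)
    (h₂ : (G.deleteEdge s((x, true), (y, false))).uadj v w)
    (h₃ : (G.deleteEdge s((x, true), (y, false))).uadj w u) :
    ∃ a b c, R a b ∧ R b c ∧ R a c := by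
  have h₁ := h.uadj_deleteEdge_cases h₁
  have h₂ := h.uadj_deleteEdge_cases h₂
  have h₃ := h.uadj_deleteEdge_cases h₃
  grind

theorem not_hasCycloid_deleteEdge_xy (h : IsReductionGraph A B C x y z R G)
    (hsymm : ∀ a b, R a b → R b a) (hR : ∀ a b, R a b → a ∈ A ∪ B ∪ C)
    (hfree : ¬ ∃ a b c, R a b ∧ R b c ∧ R a c) :
    ¬ HasCycloid (G.deleteEdge s((x, true), (y, false))) := by
  intro hcyc
  obtain ⟨s, l, hnodup, hchain, hclose, hlen⟩ :=
    exists_exceptional_cycloid_of_potential _ (fun _ _ => h.level_eq_add_one_of_bStep) hcyc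
  have hdiff := reductionPotential_flip_sub A B C x y z s
  rcases l with _ | ⟨t, _ | ⟨r, _ | ⟨q, l⟩⟩⟩
  · exact h.loop_not_mem_edges s (by simpa [BStep] using hclose.1)
  · simp only [List.length_cons, List.length_nil] at hlen
    omega
  · simp only [List.map_cons, List.map_nil, List.nodup_cons, List.mem_cons, List.mem_nil_iff,
      or_false, not_or] at hnodup
    rw [List.isChain_cons_cons, List.isChain_pair] at hchain
    exact hfree (h.exists_triangle_of_uadj hsymm hR hnodup.1.1 hnodup.2.1 (Ne.symm hnodup.1.2)
      hchain.1.uadj hchain.2.uadj hclose.uadj)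
  · simp only [List.length_cons] at hlen
    omega

theorem hasCycloid_deleteEdge_of_triangle (h : IsReductionGraph A B C x y z R G) {a b c : V}
    (ha : a ∈ A) (hb : b ∈ B) (hc : c ∈ C) (hab : R a b) (hbc : R b c) (hac : R a c)
    (e : Sym2 (Side V)) : HasCycloid (G.deleteEdge e) := by
  by_cases he : e = s((x, true), (y, false)) ∨ e = s((y, true), (z, false)) ∨
      e = s((z, true), (x, false))
  · have hoff : ∀ p ∈ e, p.1 ∉ A ∪ B ∪ C := by
      rcases he with rfl | rfl | rfl <;> intro p hp <;> rcases Sym2.mem_iff.1 hp with rfl | rfl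
      all_goals first | exact h.x_not_mem | exact h.y_not_mem | exact h.z_not_mem
    have hne : ∀ {v σ w τ}, v ∈ A ∪ B ∪ C → s((v, σ), (w, τ)) ≠ e := fun hv hve =>
      hoff _ (hve ▸ Sym2.mem_mk_left _ _) hv
    have hCB : s((c, false), (b, false)) ∈ G.E := by
      rw [h.edges]
      exact Or.inl ⟨b, c, hbc, Or.inr (Or.inr ⟨hb, hc, Sym2.eq_swap⟩)⟩
    have hBA : s((b, true), (a, false)) ∈ G.E := by
      rw [h.edges]
      exact Or.inl ⟨a, b, hab, Or.inl ⟨ha, hb, Sym2.eq_swap⟩⟩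
    have hAC : s((a, true), (c, false)) ∈ G.E := by
      rw [h.edges]
      exact Or.inl ⟨a, c, hac, Or.inr (Or.inl ⟨ha, hc, rfl⟩)⟩
    exact hasCycloid_of_triangle
      (fun hcb : c = b => Set.disjoint_left.1 h.disjoint_BC hb (hcb ▸ hc))
      (fun hba : b = a => Set.disjoint_left.1 h.disjoint_AB ha (hba ▸ hb))
      (fun hca : c = a => Set.disjoint_left.1 h.disjoint_AC ha (hca ▸ hc))
      ⟨hCB, hne (by simp [hc])⟩ ⟨hBA, hne (by simp [hb])⟩ ⟨hAC, hne (by simp [ha])⟩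
  · simp only [not_or] at he
    have hxyz : ∀ {f}, f = s((x, true), (y, false)) ∨ f = s((y, true), (z, false)) ∨
        f = s((z, true), (x, false)) → f ∈ G.E := fun hf => by
      rw [h.edges]
      right
      simpa using hf
    exact hasCycloid_of_triangle h.x_ne_y h.y_ne_z h.x_ne_z
      ⟨hxyz (Or.inl rfl), Ne.symm he.1⟩ ⟨hxyz (Or.inr (Or.inl rfl)), Ne.symm he.2.1⟩
      (δ := false) ⟨hxyz (Or.inr (Or.inr rfl)), Ne.symm he.2.2⟩

end IsReductionGraph

theorem exists_triangle_mem_parts {A B C : Set V} {R : V → V → Prop}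
    (hsymm : ∀ a b, R a b → R b a)
    (htripartite : ∀ a b, R a b →
        ((a ∈ A ∧ b ∈ B) ∨ (a ∈ B ∧ b ∈ A) ∨ (a ∈ A ∧ b ∈ C) ∨
         (a ∈ C ∧ b ∈ A) ∨ (a ∈ B ∧ b ∈ C) ∨ (a ∈ C ∧ b ∈ B)))
    (hAB : Disjoint A B) (hAC : Disjoint A C) (hBC : Disjoint B C)
    (h : ∃ a b c, R a b ∧ R b c ∧ R a c) :
    ∃ a ∈ A, ∃ b ∈ B, ∃ c ∈ C, R a b ∧ R b c ∧ R a c := by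
  obtain ⟨u, v, w, huv, hvw, huw⟩ := h
  have := htripartite u v huv
  have := htripartite v w hvw
  have := htripartite u w huw
  have := hsymm u v huv
  have := hsymm v w hvw
  have := hsymm u w huw
  rw [Set.disjoint_left] at hAB hAC hBC
  grind

theorem statement_19_general (A B C : Set V) (x y z : V) (R : V → V → Prop)
    (hsymm : ∀ a b, R a b → R b a)
    (htripartite : ∀ a b, R a b →
        ((a ∈ A ∧ b ∈ B) ∨ (a ∈ B ∧ b ∈ A) ∨ (a ∈ A ∧ b ∈ C) ∨
         (a ∈ C ∧ b ∈ A) ∨ (a ∈ B ∧ b ∈ C) ∨ (a ∈ C ∧ b ∈ B)))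
    (hAB : Disjoint A B) (hAC : Disjoint A C) (hBC : Disjoint B C)
    (hx : x ∉ A ∪ B ∪ C) (hy : y ∉ A ∪ B ∪ C) (hz : z ∉ A ∪ B ∪ C)
    (hxy : x ≠ y) (hyz : y ≠ z) (hxz : x ≠ z)
    (G : BDGraph V)
    (hE : G.E =
        {e | ∃ a b, R a b ∧
            ((a ∈ A ∧ b ∈ B ∧ e = s((a, false), (b, true))) ∨
             (a ∈ A ∧ b ∈ C ∧ e = s((a, true), (b, false))) ∨
             (a ∈ B ∧ b ∈ C ∧ e = s((a, false), (b, false))))} ∪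
          {s((x, true), (y, false)), s((y, true), (z, false)), s((z, true), (x, false))}) :
    (∃ e ∈ G.E, ¬ HasCycloid (G.deleteEdge e)) ↔
      ¬ ∃ a b c, R a b ∧ R b c ∧ R a c := by
  have h : IsReductionGraph A B C x y z R G := ⟨hAB, hAC, hBC, hx, hy, hz, hxy, hyz, hxz, hE⟩
  constructor
  · rintro ⟨e, -, hacyclic⟩ htriangle
    obtain ⟨a, ha, b, hb, c, hc, hab, hbc, hac⟩ :=
      exists_triangle_mem_parts hsymm htripartite hAB hAC hBC htriangle
    exact hacyclic (h.hasCycloid_deleteEdge_of_triangle ha hb hc hab hbc hac e)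
  · intro hfree
    have hR : ∀ a b, R a b → a ∈ A ∪ B ∪ C := fun a b hab => by
      rcases htripartite a b hab with ⟨ha, -⟩ | ⟨ha, -⟩ | ⟨ha, -⟩ | ⟨ha, -⟩ | ⟨ha, -⟩ | ⟨ha, -⟩ <;>
        simp [ha]
    have hxy_edge : s((x, true), (y, false)) ∈ G.E := by
      rw [hE]
      simp
    exact ⟨_, hxy_edge, h.not_hasCycloid_deleteEdge_xy hsymm hR hfree⟩

/-- The reduction from finding triangles in tripartite graphs to
finding bidirected feedback edges.  `R` is the (symmetric) adjacency of a tripartite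
graph with parts `A`, `B`, `C`; the bidirected graph `G` is built on
`A ∪ B ∪ C ∪ {x, y, z}` as in the construction (sign `true` = `+`, `false` = `−`).
Then `G` has a bidirected feedback edge (an edge whose removal makes `G` acyclic) iff
the tripartite graph has no triangle. -/
theorem statement_19 (A B C : Set V) (x y z : V) (R : V → V → Prop)
    (hsymm : ∀ a b, R a b → R b a)
    (htripartite : ∀ a b, R a b →
        ((a ∈ A ∧ b ∈ B) ∨ (a ∈ B ∧ b ∈ A) ∨ (a ∈ A ∧ b ∈ C) ∨
         (a ∈ C ∧ b ∈ A) ∨ (a ∈ B ∧ b ∈ C) ∨ (a ∈ C ∧ b ∈ B)))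
    (hAB : Disjoint A B) (hAC : Disjoint A C) (hBC : Disjoint B C)
    (hx : x ∉ A ∪ B ∪ C) (hy : y ∉ A ∪ B ∪ C) (hz : z ∉ A ∪ B ∪ C)
    (hxy : x ≠ y) (hyz : y ≠ z) (hxz : x ≠ z)
    (G : BDGraph V)
    (hverts : G.verts = A ∪ B ∪ C ∪ {x, y, z})
    (hE : G.E =
        {e | ∃ a b, R a b ∧
            ((a ∈ A ∧ b ∈ B ∧ e = s((a, false), (b, true))) ∨
             (a ∈ A ∧ b ∈ C ∧ e = s((a, true), (b, false))) ∨
             (a ∈ B ∧ b ∈ C ∧ e = s((a, false), (b, false))))} ∪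
          {s((x, true), (y, false)), s((y, true), (z, false)), s((z, true), (x, false))}) :
    (∃ e ∈ G.E, ¬ HasCycloid (G.deleteEdge e)) ↔
      ¬ ∃ a b c, R a b ∧ R b c ∧ R a c :=
  statement_19_general A B C x y z R hsymm htripartite hAB hAC hBC hx hy hz hxy hyz hxz G hE

end Paper
end
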